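/- arXiv:1705.08648 — 9 statements merged into one kernel-verified Lean document; each statement's English description precedes it below -/
import Mathlib

section
/- Let β > 0, ω > 0, set γ = e^(−βω) and η = tanh(βω/2), and let λ be a real number. Define the 2×2 complex matrix 𝔸 = ((1+γ)/2)·[[1, iη],[−iη, 1]] and the 4×4 complex matrix C given in 2×2 blocks by C = [[𝔸, λ𝔸],[λ𝔸, 𝔸]]. Then C is positive semidefinite if and only if λ² ≤ 1. -/
/-!
`𝔸` is a positive multiple of `1 - η σ_y`, whose eigenvalues `1 ± η` are positive because
`|tanh| < 1`; so `𝔸` is positive definite. By the Schur complement, `C` is then positive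
semidefinite iff `𝔸 - λ𝔸 𝔸⁻¹ λ𝔸 = (1 - λ²) 𝔸` is, i.e. iff `λ² ≤ 1`.
-/

open scoped ComplexOrder

namespace Matrix

variable {n 𝕜 : Type*} [Fintype n] [RCLike 𝕜] {A : Matrix n n 𝕜}

lemma PosDef.posSemidef_ofReal_smul_iff [Nonempty n] (hA : A.PosDef) {c : ℝ} :
    ((c : 𝕜) • A).PosSemidef ↔ 0 ≤ c := by
  refine ⟨fun h => ?_, fun hc => hA.posSemidef.smul (RCLike.ofReal_nonneg.2 hc)⟩
  obtain ⟨r, hr, hrA⟩ := RCLike.pos_iff_exists_ofReal.1 hA.trace_pos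
  have htrace := h.trace_nonneg
  rw [trace_smul, ← hrA, smul_eq_mul, ← RCLike.ofReal_mul, RCLike.ofReal_nonneg] at htrace
  exact nonneg_of_mul_nonneg_left htrace hr

lemma PosDef.posSemidef_fromBlocks_smul_iff [DecidableEq n] [Nonempty n] (hA : A.PosDef)
    (lam : ℝ) :
    (fromBlocks A ((lam : 𝕜) • A) ((lam : 𝕜) • A) A).PosSemidef ↔ lam ^ 2 ≤ 1 := by
  let _ := hA.isUnit.invertible
  have hB : ((lam : 𝕜) • A)ᴴ = (lam : 𝕜) • A := by
    rw [conjTranspose_smul, hA.isHermitian.eq, RCLike.star_def, RCLike.conj_ofReal]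
  have hSchur : A - (lam : 𝕜) • A * A⁻¹ * ((lam : 𝕜) • A) = ((1 - lam ^ 2 : ℝ) : 𝕜) • A := by
    rw [smul_mul_assoc, mul_inv_of_invertible, smul_mul_assoc, one_mul, smul_smul]
    push_cast
    rw [sub_smul, one_smul, sq]
  have hC := fromBlocks₂₂ A ((lam : 𝕜) • A) hA
  rw [hB, hSchur] at hC
  rw [hC, hA.posSemidef_ofReal_smul_iff, sub_nonneg]

end Matrix

open Matrix Complex in
/-- The matrix is `1 - η σ_y`; the decomposition below is its spectral decomposition. -/
lemma posDef_one_sub_smul_pauliY {η : ℝ} (hη : |η| < 1) :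
    (!![1, I * η; -(I * η), 1] : Matrix (Fin 2) (Fin 2) ℂ).PosDef := by
  obtain ⟨hη₁, hη₂⟩ := abs_lt.1 hη
  have hdecomp : (!![1, I * η; -(I * η), 1] : Matrix (Fin 2) (Fin 2) ℂ) =
      (((1 + η) / 2 : ℝ) : ℂ) • vecMulVec ![1, -I] (star ![1, -I]) +
      (((1 - η) / 2 : ℝ) : ℂ) • vecMulVec ![1, I] (star ![1, I]) := by
    ext i j
    simp only [Matrix.add_apply, Matrix.smul_apply, vecMulVec_apply, Pi.star_apply]
    fin_cases i <;> fin_cases j <;> simp [Complex.ext_iff] <;> ring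
  have hpsd : (!![1, I * η; -(I * η), 1] : Matrix (Fin 2) (Fin 2) ℂ).PosSemidef := by
    rw [hdecomp]
    exact ((posSemidef_vecMulVec_self_star _).smul (zero_le_real.2 (by linarith))).add
      ((posSemidef_vecMulVec_self_star _).smul (zero_le_real.2 (by linarith)))
  have hdet : (!![1, I * η; -(I * η), 1] : Matrix (Fin 2) (Fin 2) ℂ).det = (1 - η ^ 2 : ℝ) := by
    rw [det_fin_two_of]
    push_cast
    linear_combination (η : ℂ) ^ 2 * I_sq
  rw [hpsd.posDef_iff_det_ne_zero, hdet, ofReal_ne_zero]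
  nlinarith

theorem kossakowski_psd_iff_general (β ω : ℝ) (γ η lam : ℝ)
    (hγ : γ = Real.exp (-(β * ω))) (hη : η = Real.tanh (β * ω / 2))
    (A : Matrix (Fin 2) (Fin 2) ℂ)
    (hA : A = (((1 + γ) / 2 : ℝ) : ℂ) •
      !![1, Complex.I * (η : ℂ); -(Complex.I * (η : ℂ)), 1]) :
    (Matrix.fromBlocks A ((lam : ℂ) • A) ((lam : ℂ) • A) A).PosSemidef ↔ lam ^ 2 ≤ 1 := by
  have hA_posDef : A.PosDef := by
    rw [hA]
    refine (posDef_one_sub_smul_pauliY ?_).smul (Complex.zero_lt_real.2 ?_)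
    · rw [hη]
      exact Real.abs_tanh_lt_one _
    · rw [hγ]
      positivity
  exact hA_posDef.posSemidef_fromBlocks_smul_iff lam

/-- The Kossakowski matrix `C = [[𝔸, λ𝔸],[λ𝔸, 𝔸]]`, with
`𝔸 = ((1+γ)/2)·[[1, iη],[−iη, 1]]`, `γ = e^{−βω}`, `η = tanh(βω/2)`,
is positive semidefinite if and only if `λ² ≤ 1`. -/
theorem kossakowski_psd_iff (β ω : ℝ) (hβ : 0 < β) (hω : 0 < ω) (γ η lam : ℝ)
    (hγ : γ = Real.exp (-(β * ω))) (hη : η = Real.tanh (β * ω / 2))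
    (A : Matrix (Fin 2) (Fin 2) ℂ)
    (hA : A = (((1 + γ) / 2 : ℝ) : ℂ) •
      !![1, Complex.I * (η : ℂ); -(Complex.I * (η : ℂ)), 1]) :
    (Matrix.fromBlocks A ((lam : ℂ) • A) ((lam : ℂ) • A) A).PosSemidef ↔ lam ^ 2 ≤ 1 :=
  kossakowski_psd_iff_general β ω γ η lam hγ hη A hA
end

section
/- Let γ ∈ (0,1], λ ∈ [−1,1] and ω ∈ ℝ. Let σ be the 6×6 real block-diagonal matrix consisting of three 2×2 blocks [[0,1],[−1,0]] along the diagonal, let B be the 6×6 real matrix written in 2×2 blocks as [[0,0,1₂],[0,0,1₂],[1₂,1₂,0]], and set 𝓛 = (γ−1)·1₆ + 2ω·σ + ((γ−1)λ/√2)·B. Then the symmetric matrix 𝓛 + 𝓛ᵀ is negative semidefinite. -/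
open Matrix

/-- The 6×6 symplectic matrix: three 2×2 blocks `[[0,1],[−1,0]]` along the diagonal. -/
def sigma6 : Matrix (Fin 6) (Fin 6) ℝ :=
  Matrix.of fun i j =>
    if i.val / 2 = j.val / 2 then
      (if i.val % 2 = 0 ∧ j.val % 2 = 1 then 1
       else if i.val % 2 = 1 ∧ j.val % 2 = 0 then -1 else 0)
    else 0

/-- The 6×6 matrix written in 2×2 blocks as `[[0,0,1₂],[0,0,1₂],[1₂,1₂,0]]`. -/
def B6 : Matrix (Fin 6) (Fin 6) ℝ :=
  Matrix.of fun i j =>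
    if ((i.val / 2 < 2 ∧ j.val / 2 = 2) ∨ (i.val / 2 = 2 ∧ j.val / 2 < 2)) ∧
        i.val % 2 = j.val % 2 then 1 else 0

/-! Since `σ` is antisymmetric and `B` symmetric, `-(𝓛 + 𝓛ᵀ) = 2(1 - γ)(1 + (λ/√2) B)`, and
`1 + t B` is positive semidefinite as soon as `|t| ≤ 1/√2`, the eigenvalues of `B` being `0, ±√2`. -/

lemma sigma6_transpose : sigma6ᵀ = -sigma6 := by
  ext i j
  fin_cases i <;> fin_cases j <;> simp [sigma6]

lemma B6_transpose : B6ᵀ = B6 := by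
  ext i j
  fin_cases i <;> fin_cases j <;> simp [B6]

lemma dotProduct_B6_mulVec (x : Fin 6 → ℝ) :
    x ⬝ᵥ (B6 *ᵥ x) = 2 * ((x 0 + x 2) * x 4 + (x 1 + x 3) * x 5) := by
  simp [dotProduct, mulVec, Fin.sum_univ_six, B6]
  ring

lemma posSemidef_one_add_smul_B6 {t : ℝ} (ht : 2 * t ^ 2 ≤ 1) : (1 + t • B6).PosSemidef := by
  rw [posSemidef_iff_dotProduct_mulVec]
  refine ⟨by simp [IsHermitian, transpose_add, B6_transpose], fun x => ?_⟩
  simp only [star_trivial, add_mulVec, one_mulVec, smul_mulVec, dotProduct_add,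
    dotProduct_smul, dotProduct_B6_mulVec, smul_eq_mul]
  simp only [dotProduct, Fin.sum_univ_six]
  -- With `u = a + b`: `(u + 2 t v)² ≥ 0` gives `2 t u v ≥ -(u² / 2 + 2 t² v²) ≥ -(a² + b² + v²)`.
  nlinarith [sq_nonneg (x 0 + x 2 + 2 * t * x 4), sq_nonneg (x 1 + x 3 + 2 * t * x 5),
    sq_nonneg (x 0 - x 2), sq_nonneg (x 1 - x 3),
    mul_nonneg (sub_nonneg.2 ht) (sq_nonneg (x 4)), mul_nonneg (sub_nonneg.2 ht) (sq_nonneg (x 5))]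

/-- For the mesoscopic generator `𝓛 = (γ−1)·1₆ + 2ω·σ + ((γ−1)λ/√2)·B`, with
`γ ∈ (0,1]` and `|λ| ≤ 1`, the symmetric matrix `𝓛 + 𝓛ᵀ` is negative semidefinite. -/
theorem generator_dissipativity (γ lam ω : ℝ)
    (hγ : γ ∈ Set.Ioc (0 : ℝ) 1) (hlam : lam ∈ Set.Icc (-1 : ℝ) 1)
    (L : Matrix (Fin 6) (Fin 6) ℝ)
    (hL : L = (γ - 1) • (1 : Matrix (Fin 6) (Fin 6) ℝ) + (2 * ω) • sigma6 +
      ((γ - 1) * lam / Real.sqrt 2) • B6) :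
    (-(L + Lᵀ)).PosSemidef := by
  have hsym : -(L + Lᵀ) = (2 * (1 - γ)) • (1 + (lam / Real.sqrt 2) • B6) := by
    subst hL
    simp only [transpose_add, transpose_smul, transpose_one, sigma6_transpose, B6_transpose]
    module
  have hlam_sq : 2 * (lam / Real.sqrt 2) ^ 2 ≤ 1 := by
    rw [div_pow, Real.sq_sqrt zero_le_two, mul_div_cancel₀ _ two_ne_zero]
    nlinarith [hlam.1, hlam.2]
  rw [hsym]
  exact (posSemidef_one_add_smul_B6 hlam_sq).smul (by linarith [hγ.2])
end

section
/- Let γ ∈ (0,1], λ ∈ [−1,1], ω ∈ ℝ and t ≥ 0. Let σ be the 6×6 real block-diagonal matrix consisting of three 2×2 blocks [[0,1],[−1,0]] along the diagonal, let B be the 6×6 real matrix written in 2×2 blocks as [[0,0,1₂],[0,0,1₂],[1₂,1₂,0]], set 𝓛 = (γ−1)·1₆ + 2ω·σ + ((γ−1)λ/√2)·B and M_t = exp(t·𝓛). Then the symmetric matrix 1₆ − M_t·M_tᵀ is positive semidefinite. Consequently, the noise matrix 𝒦_t = Σ_β − M_t·Σ_β·M_tᵀ with Σ_β = ((η²+1)/(4η))·1₆,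 η > 0, is positive semidefinite, so the Gaussian prefactor exp(−(1/2)·r_tᵀ𝒦_t r_t) of the mesoscopic dynamics has modulus at most one. -/
/-! The generator `𝓛` is dissipative: `σ` is antisymmetric, so the quadratic form of `𝓛` is
`(γ - 1) (|v|² + (λ/√2) vᵀBv)`, and `|vᵀBv| ≤ √2 |v|²`. Hence
`u ↦ xᵀ e^{u𝓛} e^{u𝓛ᵀ} x` has derivative `2 (e^{u𝓛ᵀ}x)ᵀ 𝓛 (e^{u𝓛ᵀ}x) ≤ 0` and
decreases from `|x|²`, i.e. `M_t M_tᵀ ≤ 1`. The noise matrix is a positive multiple of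
`1 - M_t M_tᵀ`. -/

open Matrix

section Dissipative

variable {n : Type*} [Fintype n]

theorem Matrix.dotProduct_mul_mul_transpose_mulVec (N A : Matrix n n ℝ) (x : n → ℝ) :
    x ⬝ᵥ (N * A * Nᵀ) *ᵥ x = (Nᵀ *ᵥ x) ⬝ᵥ A *ᵥ (Nᵀ *ᵥ x) := by
  rw [← mulVec_mulVec, ← mulVec_mulVec, dotProduct_mulVec, ← mulVec_transpose]

theorem Matrix.dotProduct_add_transpose_mulVec_self (L : Matrix n n ℝ) (v : n → ℝ) :
    v ⬝ᵥ (L + Lᵀ) *ᵥ v = 2 * (v ⬝ᵥ L *ᵥ v) := by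
  rw [add_mulVec, dotProduct_add, dotProduct_mulVec v Lᵀ, vecMul_transpose, dotProduct_comm]
  ring

variable [DecidableEq n]

attribute [local instance] Matrix.linftyOpNormedAddCommGroup Matrix.linftyOpNormedRing
  Matrix.linftyOpNormedAlgebra

theorem Matrix.hasDerivAt_exp_smul_mul_transpose (L : Matrix n n ℝ) (s : ℝ) :
    HasDerivAt (fun u : ℝ => NormedSpace.exp (u • L) * (NormedSpace.exp (u • L))ᵀ)
      (NormedSpace.exp (s • L) * (L + Lᵀ) * (NormedSpace.exp (s • L))ᵀ) s := by
  simp_rw [← exp_transpose, transpose_smul]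
  refine ((hasDerivAt_exp_smul_const L s).mul (hasDerivAt_exp_smul_const' Lᵀ s)).congr_deriv ?_
  simp only [mul_add, add_mul, mul_assoc]
  -- the sides differ only in the (defeq) multiplication instance: default vs. normed ring
  rfl

theorem Matrix.hasDerivAt_dotProduct_exp_smul_mul_transpose_mulVec (L : Matrix n n ℝ)
    (x : n → ℝ) (s : ℝ) :
    HasDerivAt
      (fun u : ℝ => x ⬝ᵥ (NormedSpace.exp (u • L) * (NormedSpace.exp (u • L))ᵀ) *ᵥ x)
      (2 * ((NormedSpace.exp (s • L))ᵀ *ᵥ x ⬝ᵥ L *ᵥ ((NormedSpace.exp (s • L))ᵀ *ᵥ x)))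
      s := by
  let φ : Matrix n n ℝ →L[ℝ] ℝ := LinearMap.toContinuousLinearMap
    { toFun := fun P => x ⬝ᵥ P *ᵥ x
      map_add' := fun P Q => by rw [add_mulVec, dotProduct_add]
      map_smul' := fun c P => by rw [smul_mulVec, dotProduct_smul]; rfl }
  rw [← dotProduct_add_transpose_mulVec_self, ← dotProduct_mul_mul_transpose_mulVec]
  exact φ.hasFDerivAt.comp_hasDerivAt s (hasDerivAt_exp_smul_mul_transpose L s)

theorem Matrix.posSemidef_one_sub_exp_smul_mul_transpose {L : Matrix n n ℝ}
    (hL : ∀ v, v ⬝ᵥ L *ᵥ v ≤ 0) {t : ℝ} (ht : 0 ≤ t) :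
    (1 - NormedSpace.exp (t • L) * (NormedSpace.exp (t • L))ᵀ).PosSemidef := by
  refine .of_dotProduct_mulVec_nonneg ?_ fun x => ?_
  · simpa using isHermitian_one.sub
      (isHermitian_mul_conjTranspose_self (NormedSpace.exp (t • L)))
  have hanti := antitone_of_hasDerivAt_nonpos
    (hasDerivAt_dotProduct_exp_smul_mul_transpose_mulVec L x) fun s =>
      mul_nonpos_of_nonneg_of_nonpos zero_le_two (hL ((NormedSpace.exp (s • L))ᵀ *ᵥ x))
  have hmono := hanti ht
  simp only [zero_smul, NormedSpace.exp_zero, transpose_one, mul_one, one_mulVec] at hmono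
  rw [star_trivial, sub_mulVec, dotProduct_sub, one_mulVec]
  linarith

end Dissipative

theorem dotProduct_sigma6_mulVec_self (v : Fin 6 → ℝ) : v ⬝ᵥ sigma6 *ᵥ v = 0 := by
  simp [dotProduct, mulVec, Fin.sum_univ_six, sigma6]
  ring

theorem dotProduct_B6_mulVec_self (v : Fin 6 → ℝ) :
    v ⬝ᵥ B6 *ᵥ v = 2 * ((v 0 + v 2) * v 4 + (v 1 + v 3) * v 5) := by
  simp [dotProduct, mulVec, Fin.sum_univ_six, B6]
  ring

theorem abs_dotProduct_B6_mulVec_self_le (v : Fin 6 → ℝ) :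
    |v ⬝ᵥ B6 *ᵥ v| ≤ √2 * (v ⬝ᵥ v) := by
  have hs : √2 ^ 2 = 2 := Real.sq_sqrt zero_le_two
  have hself : v ⬝ᵥ v = v 0 ^ 2 + v 1 ^ 2 + v 2 ^ 2 + v 3 ^ 2 + v 4 ^ 2 + v 5 ^ 2 := by
    simp only [dotProduct, Fin.sum_univ_six]; ring
  rw [dotProduct_B6_mulVec_self, hself, abs_le]
  have hsq (e : ℝ) : 0 ≤ √2 / 2 * ((v 0 - v 2) ^ 2 + (v 0 + v 2 - e * √2 * v 4) ^ 2 +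
      (v 1 - v 3) ^ 2 + (v 1 + v 3 - e * √2 * v 5) ^ 2) := by positivity
  constructor
  · linear_combination hsq (-1) +
      (√2 / 2 * (v 4 ^ 2 + v 5 ^ 2) + (v 0 + v 2) * v 4 + (v 1 + v 3) * v 5) * hs
  · linear_combination hsq 1 +
      (√2 / 2 * (v 4 ^ 2 + v 5 ^ 2) - (v 0 + v 2) * v 4 - (v 1 + v 3) * v 5) * hs

theorem dotProduct_generator_mulVec_self_nonpos {γ lam : ℝ} (hγ : γ ≤ 1) (hlam : |lam| ≤ 1)
    (ω : ℝ) (v : Fin 6 → ℝ) :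
    v ⬝ᵥ ((γ - 1) • (1 : Matrix (Fin 6) (Fin 6) ℝ) + (2 * ω) • sigma6 +
      ((γ - 1) * lam / √2) • B6) *ᵥ v ≤ 0 := by
  have hexpand : v ⬝ᵥ ((γ - 1) • (1 : Matrix (Fin 6) (Fin 6) ℝ) + (2 * ω) • sigma6 +
      ((γ - 1) * lam / √2) • B6) *ᵥ v =
        (γ - 1) * (v ⬝ᵥ v + lam / √2 * (v ⬝ᵥ B6 *ᵥ v)) := by
    simp only [add_mulVec, smul_mulVec, one_mulVec, dotProduct_add, dotProduct_smul,
      dotProduct_sigma6_mulVec_self, smul_eq_mul]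
    ring
  have hB : |lam / √2 * (v ⬝ᵥ B6 *ᵥ v)| ≤ v ⬝ᵥ v := by
    have hs : 0 < √2 := by positivity
    rw [abs_mul, abs_div, abs_of_pos hs, div_mul_eq_mul_div, div_le_iff₀ hs, mul_comm _ √2]
    exact mul_le_mul hlam (abs_dotProduct_B6_mulVec_self_le v) (abs_nonneg _) zero_le_one
      |>.trans_eq (one_mul _)
  rw [hexpand]
  exact mul_nonpos_of_nonpos_of_nonneg (by linarith) (by linarith [(abs_le.1 hB).1])

/-- For `M_t = exp(t𝓛)` with `𝓛 = (γ−1)·1₆ + 2ω·σ + ((γ−1)λ/√2)·B`, `γ ∈ (0,1]`,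
`|λ| ≤ 1` and `t ≥ 0`, the matrix `1₆ − M_t·M_tᵀ` is positive semidefinite; consequently
the noise matrix `𝒦_t = Σ_β − M_t·Σ_β·M_tᵀ`, `Σ_β = ((η²+1)/(4η))·1₆` with `η > 0`, is
positive semidefinite and the Gaussian prefactor has modulus at most one. -/
theorem noise_matrix_psd (γ lam ω t η : ℝ)
    (hγ : γ ∈ Set.Ioc (0 : ℝ) 1) (hlam : lam ∈ Set.Icc (-1 : ℝ) 1)
    (ht : 0 ≤ t) (hη : 0 < η)
    (L M : Matrix (Fin 6) (Fin 6) ℝ)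
    (hL : L = (γ - 1) • (1 : Matrix (Fin 6) (Fin 6) ℝ) + (2 * ω) • sigma6 +
      ((γ - 1) * lam / Real.sqrt 2) • B6)
    (hM : M = NormedSpace.exp (t • L))
    (Sβ K : Matrix (Fin 6) (Fin 6) ℝ)
    (hSβ : Sβ = ((η ^ 2 + 1) / (4 * η)) • (1 : Matrix (Fin 6) (Fin 6) ℝ))
    (hK : K = Sβ - M * Sβ * Mᵀ) :
    ((1 : Matrix (Fin 6) (Fin 6) ℝ) - M * Mᵀ).PosSemidef ∧
    K.PosSemidef ∧
    ∀ r : Fin 6 → ℝ, |Real.exp (-(1 / 2) * (r ⬝ᵥ K *ᵥ r))| ≤ 1 := by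
  have hdissipative : ∀ v, v ⬝ᵥ L *ᵥ v ≤ 0 :=
    hL ▸ dotProduct_generator_mulVec_self_nonpos hγ.2 (abs_le.2 hlam) ω
  have hcontraction : ((1 : Matrix (Fin 6) (Fin 6) ℝ) - M * Mᵀ).PosSemidef :=
    hM ▸ posSemidef_one_sub_exp_smul_mul_transpose hdissipative ht
  have hK_smul :
      K = ((η ^ 2 + 1) / (4 * η)) • ((1 : Matrix (Fin 6) (Fin 6) ℝ) - M * Mᵀ) := by
    rw [hK, hSβ, Matrix.mul_smul, mul_one, Matrix.smul_mul, smul_sub]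
  have hnoise : K.PosSemidef := hK_smul ▸ hcontraction.smul (by positivity)
  refine ⟨hcontraction, hnoise, fun r => ?_⟩
  have hr : 0 ≤ r ⬝ᵥ K *ᵥ r := by simpa using hnoise.dotProduct_mulVec_nonneg r
  rw [abs_of_pos (Real.exp_pos _), Real.exp_le_one_iff]
  linarith
end

section
/- Let β > 0, ω > 0, set γ = e^(−βω), η = tanh(βω/2), let λ ∈ [−1,1] and t ≥ 0. Let σ be the 6×6 real block-diagonal matrix consisting of three 2×2 blocks [[0,1],[−1,0]] along the diagonal, let B be the 6×6 real matrix written in 2×2 blocks as [[0,0,1₂],[0,0,1₂],[1₂,1₂,0]], set 𝓛 = (γ−1)·1₆ + 2ω·σ + ((γ−1)λ/√2)·B and M_t = exp(t·𝓛). Then, regarding all matrices as complex matrices, the Hermitian 6×6 matrix (Σ_β + (i/2)·σ) − M_t·(Σ_β + (i/2)·σ)·M_tᵀ is positive semidefinite, where Σ_β = ((η²+1)/(4η))·1₆. -/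
/-!
The generator splits into commuting parts, `t𝓛 = s (1 + λ J) + θ σ` with `s = t (γ - 1) ≤ 0`,
`θ = 2ωt` and `J = B / √2`, a real symmetric matrix with `J ^ 3 = J` commuting with `σ`. Hence
`M_t = F R` with `F = exp (s (1 + λ J))` symmetric and `R = exp (θ σ)` orthogonal, both commuting
with `G = Σ_β + (i/2) σ`, so that `M_t G M_tᵀ = F G F`. On the spectral projections `P` of `J`
(eigenvalues `1, -1, 0`) the matrix `F` acts as a scalar `e ∈ (0, 1]`, which gives
`G - F G F = ∑ (1 - e²) P G P ≥ 0`, since `G ≥ 0` as `(η² + 1) / (4η) ≥ 1 / 2`.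
-/

open Matrix
open scoped ComplexOrder

open NormedSpace

section Tripotent

variable {R : Type*} [Ring R] [Algebra ℝ R]

/-- The spectral projections of a tripotent `J` (`J ^ 3 = J`) onto the eigenvalues
`tripotentEigenvalue i`. -/
noncomputable def tripotentProj (J : R) : Fin 3 → R
  | 0 => (2⁻¹ : ℝ) • (J ^ 2 + J)
  | 1 => (2⁻¹ : ℝ) • (J ^ 2 - J)
  | 2 => 1 - J ^ 2

def tripotentEigenvalue : Fin 3 → ℝ
  | 0 => 1
  | 1 => -1
  | 2 => 0

theorem sum_tripotentProj (J : R) : ∑ i, tripotentProj J i = 1 := by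
  simp only [Fin.sum_univ_three, tripotentProj]
  module

variable {J : R}

theorem mul_tripotentProj (hJ : J ^ 3 = J) (i : Fin 3) :
    J * tripotentProj J i = tripotentEigenvalue i • tripotentProj J i := by
  have h3 : J * J ^ 2 = J := by rw [← pow_succ', hJ]
  fin_cases i <;>
    simp only [tripotentProj, tripotentEigenvalue, mul_smul_comm, mul_add, mul_sub, mul_one, h3,
      ← pow_two] <;> module

theorem isIdempotentElem_tripotentProj (hJ : J ^ 3 = J) (i : Fin 3) :
    IsIdempotentElem (tripotentProj J i) := by
  have h1 := mul_tripotentProj hJ i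
  have h2 : J ^ 2 * tripotentProj J i = tripotentEigenvalue i ^ 2 • tripotentProj J i := by
    rw [pow_two, mul_assoc, h1, mul_smul_comm, h1, smul_smul, pow_two]
  unfold IsIdempotentElem
  nth_rw 1 [tripotentProj.eq_def]
  fin_cases i <;> simp only [smul_mul_assoc, add_mul, sub_mul, one_mul, h1, h2] <;>
    simp only [tripotentEigenvalue] <;> module

theorem Commute.tripotentProj_right {X : R} (h : Commute X J) (i : Fin 3) :
    Commute X (tripotentProj J i) := by
  fin_cases i <;> simp only [tripotentProj]
  · exact ((h.pow_right 2).add_right h).smul_right _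
  · exact ((h.pow_right 2).sub_right h).smul_right _
  · exact (Commute.one_right X).sub_right (h.pow_right 2)

theorem IsSelfAdjoint.tripotentProj [StarRing R] [StarModule ℝ R] (h : IsSelfAdjoint J)
    (i : Fin 3) : IsSelfAdjoint (tripotentProj J i) := by
  fin_cases i <;> simp only [_root_.tripotentProj]
  · exact (IsSelfAdjoint.all _).smul ((h.pow 2).add h)
  · exact (IsSelfAdjoint.all _).smul ((h.pow 2).sub h)
  · exact (IsSelfAdjoint.one R).sub (h.pow 2)

end Tripotent

theorem NormedSpace.exp_mul_of_mul_eq_smul {𝔸 : Type*} [NormedRing 𝔸] [NormedAlgebra ℝ 𝔸]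
    [CompleteSpace 𝔸] {X P : 𝔸} {a : ℝ} (h : X * P = a • P) :
    exp X * P = Real.exp a • P := by
  have hpow (n : ℕ) : X ^ n * P = a ^ n • P := by
    induction n with
    | zero => simp
    | succ n ih => rw [pow_succ', mul_assoc, ih, mul_smul_comm, h, smul_smul, pow_succ]
  rw [exp_eq_tsum ℝ, Real.exp_eq_exp_ℝ, exp_eq_tsum ℝ, ← (expSeries_summable' X).tsum_mul_right,
    ← (expSeries_summable' a).tsum_smul_const]
  congr 1 with n
  rw [smul_mul_assoc, hpow, smul_smul, smul_eq_mul]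

section

variable {n : Type*} [Fintype n] [DecidableEq n]

theorem Matrix.exp_mul_of_mul_eq_smul {X P : Matrix n n ℂ} {a : ℝ} (h : X * P = a • P) :
    exp X * P = Real.exp a • P :=
  open scoped Norms.Operator in NormedSpace.exp_mul_of_mul_eq_smul h

theorem Matrix.exp_mul_transpose_exp_of_transpose_eq_neg {𝔸 : Type*} [NormedCommRing 𝔸]
    [NormedAlgebra ℚ 𝔸] [CompleteSpace 𝔸] {S : Matrix n n 𝔸} (hS : Sᵀ = -S) :
    exp S * (exp S)ᵀ = 1 := by
  rw [← Matrix.exp_transpose, hS, ← Matrix.exp_add_of_commute _ _ (Commute.refl S).neg_right,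
    add_neg_cancel, exp_zero]

theorem Matrix.map_ofReal_exp (X : Matrix n n ℝ) :
    (exp X).map Complex.ofReal = exp (X.map Complex.ofReal) :=
  open scoped Norms.Operator in
  map_exp Complex.ofRealHom.mapMatrix (continuous_id.matrix_map Complex.continuous_ofReal) X

end

theorem sub_mul_mul_mul_eq_smul {R : Type*} [Ring R] [Algebra ℝ R] {F G P : R} {e : ℝ}
    (hFP : F * P = e • P) (hPG : Commute P G) (hP : IsIdempotentElem P) :
    (G - F * G * F) * P = (1 - e ^ 2) • (P * G * P) := by
  have hPGP : P * G * P = P * G := by rw [mul_assoc, ← hPG.eq, ← mul_assoc, hP.eq]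
  calc (G - F * G * F) * P = G * P - e • (F * (G * P)) := by
        rw [sub_mul, mul_assoc, hFP, mul_smul_comm, mul_assoc]
    _ = (1 - e ^ 2) • (P * G * P) := by
        rw [← hPG.eq, ← mul_assoc, hFP, smul_mul_assoc, smul_smul, hPGP, sub_smul, one_smul,
          pow_two]

section Positivity

variable {n : Type*} [Fintype n] [DecidableEq n]

theorem Matrix.PosSemidef.sub_mul_mul_of_spectral_contraction {𝕜 ι : Type*} [RCLike 𝕜]
    [Fintype ι] {G F : Matrix n n 𝕜} (hG : G.PosSemidef) (P : ι → Matrix n n 𝕜) (e : ι → ℝ)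
    (hsum : ∑ i, P i = 1) (hP : ∀ i, (P i).IsHermitian) (hidem : ∀ i, IsIdempotentElem (P i))
    (hPG : ∀ i, Commute (P i) G) (hFP : ∀ i, F * P i = e i • P i) (he : ∀ i, |e i| ≤ 1) :
    (G - F * G * F).PosSemidef := by
  have hsplit : G - F * G * F = ∑ i, (1 - e i ^ 2) • (P i * G * P i) := by
    rw [← Finset.sum_congr rfl fun i _ => sub_mul_mul_mul_eq_smul (hFP i) (hPG i) (hidem i),
      ← Finset.mul_sum, hsum, mul_one]
  rw [hsplit]
  refine posSemidef_sum _ fun i _ => PosSemidef.smul ?_ ?_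
  · simpa only [(hP i).eq] using hG.mul_mul_conjTranspose_same (P i)
  · nlinarith [abs_le.mp (he i)]

theorem Matrix.posSemidef_smul_one_add_I_div_two_smul {S : Matrix n n ℂ} (hS : Sᴴ = -S)
    (hS2 : S * S = -1) {c : ℝ} (hc : 1 / 2 ≤ c) :
    ((c : ℂ) • 1 + (Complex.I / 2) • S).PosSemidef := by
  -- `N = 1 + I • S` is Hermitian with `N * N = 2 • N`, so `N / 2 = Nᴴ N / 4 ≥ 0`.
  set N : Matrix n n ℂ := 1 + Complex.I • S
  have hN : Nᴴ = N := by
    simp only [N, conjTranspose_add, conjTranspose_one, conjTranspose_smul, hS, Complex.star_def,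
      Complex.conj_I, smul_neg, neg_smul, neg_neg]
  have hdecomp : (c : ℂ) • 1 + (Complex.I / 2) • S =
      ((c - 1 / 2 : ℝ) : ℂ) • 1 + (1 / 4 : ℂ) • (Nᴴ * N) := by
    rw [hN]
    simp only [N, mul_add, add_mul, one_mul, mul_one, smul_mul_smul_comm, hS2, Complex.I_mul_I]
    push_cast
    module
  rw [hdecomp]
  exact (PosSemidef.one.smul (Complex.zero_le_real.mpr (by linarith))).add
    ((posSemidef_conjTranspose_mul_self N).smul (by norm_num [Complex.nonneg_iff]))

end Positivity

section QuasiFreeSemigroup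

variable {n : Type*} [Fintype n] [DecidableEq n] {S J : Matrix n n ℂ}

theorem posSemidef_sub_exp_mul_mul_exp_transpose (hSt : Sᵀ = -S) (hSh : Sᴴ = -S)
    (hS2 : S * S = -1) (hJ3 : J ^ 3 = J) (hJt : Jᵀ = J) (hJh : J.IsHermitian)
    (hJS : Commute J S) {c s lam θ : ℝ} (hc : 1 / 2 ≤ c) (hs : s ≤ 0) (hlam : |lam| ≤ 1) :
    ((c : ℂ) • 1 + (Complex.I / 2) • S -
      exp (s • (1 + lam • J) + θ • S) * ((c : ℂ) • 1 + (Complex.I / 2) • S) *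
        (exp (s • (1 + lam • J) + θ • S))ᵀ).PosSemidef := by
  set G : Matrix n n ℂ := (c : ℂ) • 1 + (Complex.I / 2) • S
  set A : Matrix n n ℂ := 1 + lam • J
  have hAS : Commute A S := (Commute.one_left S).add_left (hJS.smul_left lam)
  have hSG : Commute S G :=
    ((Commute.one_right S).smul_right _).add_right ((Commute.refl S).smul_right _)
  have hGJ : Commute G J :=
    (((Commute.one_right J).smul_right _).add_right (hJS.smul_right _)).symm
  have hFt : (exp (s • A))ᵀ = exp (s • A) := by
    rw [← Matrix.exp_transpose, transpose_smul, transpose_add, transpose_one, transpose_smul, hJt]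
  have hRG : exp (θ • S) * G * (exp (θ • S))ᵀ = G := by
    rw [((hSG.smul_left θ).exp_left).eq, mul_assoc,
      exp_mul_transpose_exp_of_transpose_eq_neg (by rw [transpose_smul, hSt, smul_neg]), mul_one]
  have hMGM : exp (s • A + θ • S) * G * (exp (s • A + θ • S))ᵀ =
      exp (s • A) * G * exp (s • A) := by
    rw [Matrix.exp_add_of_commute _ _ ((hAS.smul_left s).smul_right θ), transpose_mul, hFt]
    calc exp (s • A) * exp (θ • S) * G * ((exp (θ • S))ᵀ * exp (s • A))
        = exp (s • A) * (exp (θ • S) * G * (exp (θ • S))ᵀ) * exp (s • A) := by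
          simp only [mul_assoc]
      _ = exp (s • A) * G * exp (s • A) := by rw [hRG]
  rw [hMGM]
  have hAP (i : Fin 3) : (s • A) * tripotentProj J i =
      (s * (1 + lam * tripotentEigenvalue i)) • tripotentProj J i := by
    rw [smul_mul_assoc, add_mul, one_mul, smul_mul_assoc, mul_tripotentProj hJ3]
    module
  have hrate (i : Fin 3) : 0 ≤ 1 + lam * tripotentEigenvalue i := by
    fin_cases i <;> simp [tripotentEigenvalue] <;> linarith [abs_le.mp hlam]
  refine (posSemidef_smul_one_add_I_div_two_smul hSh hS2 hc).sub_mul_mul_of_spectral_contraction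
    (tripotentProj J) (fun i => Real.exp (s * (1 + lam * tripotentEigenvalue i)))
    (sum_tripotentProj J) (fun i => (hJh.isSelfAdjoint.tripotentProj i).isHermitian)
    (isIdempotentElem_tripotentProj hJ3) (fun i => (hGJ.tripotentProj_right i).symm)
    (fun i => Matrix.exp_mul_of_mul_eq_smul (hAP i)) fun i => ?_
  rw [abs_of_pos (Real.exp_pos _), Real.exp_le_one_iff]
  exact mul_nonpos_of_nonpos_of_nonneg hs (hrate i)

end QuasiFreeSemigroup

theorem Matrix.conjTranspose_map_ofReal {m : Type*} (X : Matrix m m ℝ) :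
    (X.map Complex.ofReal)ᴴ = (X.map Complex.ofReal)ᵀ := by
  rw [← conjTranspose_map _ fun x => (Complex.conj_ofReal x).symm,
    conjTranspose_eq_transpose_of_trivial, transpose_map]

section Concrete

open Complex

-- Integer models of `sigma6` and `B6`: identities between them are then checked by `decide`.
def sigma6Int : Matrix (Fin 6) (Fin 6) ℤ :=
  !![0, 1, 0, 0, 0, 0; -1, 0, 0, 0, 0, 0; 0, 0, 0, 1, 0, 0; 0, 0, -1, 0, 0, 0;
     0, 0, 0, 0, 0, 1; 0, 0, 0, 0, -1, 0]

def B6Int : Matrix (Fin 6) (Fin 6) ℤ :=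
  !![0, 0, 0, 0, 1, 0; 0, 0, 0, 0, 0, 1; 0, 0, 0, 0, 1, 0; 0, 0, 0, 0, 0, 1;
     1, 0, 1, 0, 0, 0; 0, 1, 0, 1, 0, 0]

theorem sigma6_map_ofReal : sigma6.map ofReal = (Int.castRingHom ℂ).mapMatrix sigma6Int := by
  ext i j; fin_cases i <;> fin_cases j <;> simp [sigma6, sigma6Int]

theorem B6_map_ofReal : B6.map ofReal = (Int.castRingHom ℂ).mapMatrix B6Int := by
  ext i j; fin_cases i <;> fin_cases j <;> simp [B6, B6Int]

theorem sigma6_map_mul_self : sigma6.map ofReal * sigma6.map ofReal = -1 := by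
  rw [sigma6_map_ofReal, ← map_mul, show sigma6Int * sigma6Int = -1 by decide, map_neg, map_one]

theorem transpose_sigma6_map : (sigma6.map ofReal)ᵀ = -sigma6.map ofReal := by
  rw [sigma6_map_ofReal, RingHom.mapMatrix_apply, ← transpose_map,
    show sigma6Intᵀ = -sigma6Int by decide, ← RingHom.mapMatrix_apply, map_neg]
  rfl

theorem transpose_B6_map : (B6.map ofReal)ᵀ = B6.map ofReal := by
  rw [B6_map_ofReal, RingHom.mapMatrix_apply, ← transpose_map, show B6Intᵀ = B6Int by decide]

theorem commute_B6_map_sigma6_map : Commute (B6.map ofReal) (sigma6.map ofReal) := by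
  rw [B6_map_ofReal, sigma6_map_ofReal, Commute, SemiconjBy, ← map_mul, ← map_mul,
    show B6Int * sigma6Int = sigma6Int * B6Int by decide]

theorem B6_map_pow_three : B6.map ofReal ^ 3 = 2 • B6.map ofReal := by
  rw [B6_map_ofReal, ← map_pow, show B6Int ^ 3 = 2 • B6Int by decide, map_nsmul]

theorem B6_map_div_sqrt_two_pow_three :
    ((Real.sqrt 2)⁻¹ • B6.map ofReal) ^ 3 = (Real.sqrt 2)⁻¹ • B6.map ofReal := by
  have h : (Real.sqrt 2)⁻¹ ^ 3 * 2 = (Real.sqrt 2)⁻¹ := by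
    have := Real.sq_sqrt (zero_le_two (α := ℝ))
    field_simp
    nlinarith
  rw [smul_pow, B6_map_pow_three, ← Nat.cast_smul_eq_nsmul ℝ, smul_smul, Nat.cast_ofNat, h]

end Concrete

/-- Complete positivity condition of the limiting Gaussian quasi-free semigroup:
`(Σ_β + (i/2)σ) − M_t(Σ_β + (i/2)σ)M_tᵀ ≥ 0` as a complex Hermitian matrix, where
`M_t = exp(t𝓛)`, `𝓛 = (γ−1)·1₆ + 2ω·σ + ((γ−1)λ/√2)·B`, `γ = e^{−βω}`,
`η = tanh(βω/2)`, `Σ_β = ((η²+1)/(4η))·1₆`, `|λ| ≤ 1`, `t ≥ 0`. -/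
theorem complete_positivity_condition (β ω : ℝ) (hβ : 0 < β) (hω : 0 < ω)
    (γ η lam t : ℝ) (hγ : γ = Real.exp (-(β * ω))) (hη : η = Real.tanh (β * ω / 2))
    (hlam : lam ∈ Set.Icc (-1 : ℝ) 1) (ht : 0 ≤ t)
    (L M : Matrix (Fin 6) (Fin 6) ℝ)
    (hL : L = (γ - 1) • (1 : Matrix (Fin 6) (Fin 6) ℝ) + (2 * ω) • sigma6 +
      ((γ - 1) * lam / Real.sqrt 2) • B6)
    (hM : M = NormedSpace.exp (t • L))
    (G : Matrix (Fin 6) (Fin 6) ℂ)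
    (hG : G = (((η ^ 2 + 1) / (4 * η) : ℝ) : ℂ) • (1 : Matrix (Fin 6) (Fin 6) ℂ) +
      (Complex.I / 2) • sigma6.map Complex.ofReal) :
    (G - (M.map Complex.ofReal) * G * (M.map Complex.ofReal)ᵀ).PosSemidef := by
  set S := sigma6.map Complex.ofReal
  set J : Matrix (Fin 6) (Fin 6) ℂ := (Real.sqrt 2)⁻¹ • B6.map Complex.ofReal
  have hγ₁ : γ ≤ 1 := hγ ▸ Real.exp_le_one_iff.mpr (by nlinarith)
  have hη₀ : 0 < η := by
    rw [hη, Real.tanh_eq_sinh_div_cosh]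
    exact div_pos (Real.sinh_pos_iff.mpr (by positivity)) (Real.cosh_pos _)
  have hc : 1 / 2 ≤ (η ^ 2 + 1) / (4 * η) := by
    rw [le_div_iff₀ (by positivity)]
    nlinarith [sq_nonneg (η - 1)]
  have hML : M.map Complex.ofReal = exp ((t * (γ - 1)) • (1 + lam • J) + (2 * ω * t) • S) := by
    rw [hM, map_ofReal_exp, hL]
    congr 1
    ext i j
    by_cases hij : i = j <;> simp [J, S, one_apply, hij] <;> ring
  rw [hG, hML]
  exact posSemidef_sub_exp_mul_mul_exp_transpose transpose_sigma6_map
    (by rw [conjTranspose_map_ofReal, transpose_sigma6_map]) sigma6_map_mul_self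
    B6_map_div_sqrt_two_pow_three (by rw [transpose_smul, transpose_B6_map])
    (by rw [IsHermitian, conjTranspose_smul, star_trivial, conjTranspose_map_ofReal,
      transpose_B6_map])
    (commute_B6_map_sigma6_map.smul_left _) hc (mul_nonpos_of_nonneg_of_nonpos ht (by linarith))
    (abs_le.mpr hlam)
end

section
/- Let η ∈ (0,1), λ ∈ (−1,1) and k ∈ ℝ, and define for t ≥ 0 the function ℐ(t) = ((1+η²)/(4η))² · exp(−4(k + 2ηt/(1+η))) · (e^{4k} + e^{4ηt/(1+η)} − 1) · ( e^{4(k + ηt/(1+η))} − (e^{4k} − 1)·cosh²(2ηλt/(1+η)) ). Then ℐ(t) converges to ((1+η²)/(4η))² as t → ∞. Consequently the asymptotic logarithmic negativity equals max{0, −(1/2)·log₂((1+η²)²/(4η²))} for all dissipative couplings |λ| < 1. -/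
/-!
Substituting `u = 2ηt/(1+η)` and dividing by `((1+η²)/(4η))²`, the invariant factors as
`(1 + (e^{4k} - 1) e^{-2u}) · (1 - (1 - e^{-4k}) (e^{-u} cosh(λu))²)`.
For `|λ| < 1` both `e^{-2u}` and `e^{-u} cosh(λu) = (e^{(λ-1)u} + e^{-(λ+1)u})/2` decay,
so the normalized invariant tends to `1`; the negativity follows by continuity of `logb 2`
away from `0`.
-/

open Filter Real Topology

lemma tendsto_exp_mul_atTop_nhds_zero {c : ℝ} (hc : c < 0) :
    Tendsto (fun u => exp (c * u)) atTop (𝓝 0) :=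
  tendsto_exp_comp_nhds_zero.2 (tendsto_id.const_mul_atTop_of_neg hc)

lemma tendsto_exp_neg_mul_cosh_atTop {lam : ℝ} (hlam : |lam| < 1) :
    Tendsto (fun u => exp (-u) * cosh (lam * u)) atTop (𝓝 0) := by
  obtain ⟨hlam₁, hlam₂⟩ := abs_lt.1 hlam
  have hsplit : (fun u => exp (-u) * cosh (lam * u)) =
      fun u => (exp ((lam - 1) * u) + exp (-(lam + 1) * u)) / 2 := by
    funext u
    rw [cosh_eq, show (lam - 1) * u = lam * u + -u by ring,
      show -(lam + 1) * u = -(lam * u) + -u by ring, exp_add, exp_add]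
    ring
  rw [hsplit]
  simpa using ((tendsto_exp_mul_atTop_nhds_zero (by linarith)).add
    (tendsto_exp_mul_atTop_nhds_zero (by linarith))).div_const 2

/-- `ℐ(t) / ((1+η²)/(4η))²` in the variable `u = 2ηt/(1+η)`. -/
noncomputable def normalizedInvariant (k lam u : ℝ) : ℝ :=
  exp (-4 * k - 4 * u) * (exp (4 * k) + exp (2 * u) - 1) *
    (exp (4 * k + 2 * u) - (exp (4 * k) - 1) * cosh (lam * u) ^ 2)

lemma normalizedInvariant_eq (k lam u : ℝ) :
    normalizedInvariant k lam u =
      (1 + (exp (4 * k) - 1) * exp (-2 * u)) *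
        (1 - (1 - exp (-4 * k)) * (exp (-u) * cosh (lam * u)) ^ 2) := by
  have hk : exp (-4 * k) = (exp (4 * k))⁻¹ := by rw [← exp_neg]; ring_nf
  have hu₂ : exp (-2 * u) = (exp (2 * u))⁻¹ := by rw [← exp_neg]; ring_nf
  have hu₁ : exp (-u) ^ 2 = (exp (2 * u))⁻¹ := by rw [← exp_nat_mul, ← exp_neg]; ring_nf
  have hu₄ : exp (-4 * u) = (exp (2 * u))⁻¹ ^ 2 := by rw [← exp_neg, ← exp_nat_mul]; ring_nf
  rw [normalizedInvariant, sub_eq_add_neg, exp_add, exp_add, ← neg_mul, hk, hu₂, mul_pow, hu₁,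
    hu₄]
  field_simp
  ring

lemma tendsto_normalizedInvariant_atTop (k : ℝ) {lam : ℝ} (hlam : |lam| < 1) :
    Tendsto (normalizedInvariant k lam) atTop (𝓝 1) := by
  have hfirst : Tendsto (fun u => 1 + (exp (4 * k) - 1) * exp (-2 * u)) atTop (𝓝 1) := by
    simpa using tendsto_const_nhds.add
      ((tendsto_exp_mul_atTop_nhds_zero (by norm_num : (-2 : ℝ) < 0)).const_mul (exp (4 * k) - 1))
  have hsecond : Tendsto (fun u => 1 - (1 - exp (-4 * k)) * (exp (-u) * cosh (lam * u)) ^ 2)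
      atTop (𝓝 1) := by
    simpa using tendsto_const_nhds.sub
      (((tendsto_exp_neg_mul_cosh_atTop hlam).pow 2).const_mul (1 - exp (-4 * k)))
  rw [funext (normalizedInvariant_eq k lam)]
  simpa using hfirst.mul hsecond

/-- For `|λ| < 1`, the symplectic invariant `ℐ(t)` tends to `((1+η²)/(4η))²` as `t → ∞`,
and consequently the logarithmic negativity `E(t) = max{0, −(1/2)·log₂(4ℐ(t))}`
tends to `max{0, −(1/2)·log₂((1+η²)²/(4η²))}`. -/
theorem asymptotic_entanglement_subcritical (η lam k : ℝ)
    (hη : η ∈ Set.Ioo (0 : ℝ) 1) (hlam : lam ∈ Set.Ioo (-1 : ℝ) 1)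
    (I : ℝ → ℝ)
    (hI : ∀ t : ℝ, I t =
      ((1 + η ^ 2) / (4 * η)) ^ 2 * Real.exp (-4 * (k + 2 * η * t / (1 + η))) *
        (Real.exp (4 * k) + Real.exp (4 * η * t / (1 + η)) - 1) *
        (Real.exp (4 * (k + η * t / (1 + η))) -
          (Real.exp (4 * k) - 1) * Real.cosh (2 * η * lam * t / (1 + η)) ^ 2)) :
    Filter.Tendsto I Filter.atTop (nhds (((1 + η ^ 2) / (4 * η)) ^ 2)) ∧
    Filter.Tendsto (fun t => max 0 (-(1 / 2) * Real.logb 2 (4 * I t))) Filter.atTop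
      (nhds (max 0 (-(1 / 2) * Real.logb 2 ((1 + η ^ 2) ^ 2 / (4 * η ^ 2))))) := by
  obtain ⟨hη₀, -⟩ := hη
  set C := (1 + η ^ 2) / (4 * η)
  have hI_eq : I = fun t => C ^ 2 * normalizedInvariant k lam (2 * η / (1 + η) * t) := by
    funext t
    rw [hI t, normalizedInvariant]
    ring_nf
  have hlim : Tendsto I atTop (𝓝 (C ^ 2)) := by
    rw [hI_eq]
    simpa using ((tendsto_normalizedInvariant_atTop k (abs_lt.2 hlam)).comp
      (tendsto_id.const_mul_atTop (by positivity))).const_mul (C ^ 2)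
  refine ⟨hlim, ?_⟩
  have h4C : 4 * C ^ 2 = (1 + η ^ 2) ^ 2 / (4 * η ^ 2) := by
    simp only [C]
    field_simp
  rw [← h4C]
  exact tendsto_const_nhds.max (((hlim.const_mul 4).logb (by positivity)).const_mul _)
end

section
/- Let η ∈ (0,1) and k ∈ ℝ, take λ = 1, and define for t ≥ 0 the function ℐ(t) = ((1+η²)/(4η))² · exp(−4(k + 2ηt/(1+η))) · (e^{4k} + e^{4ηt/(1+η)} − 1) · ( e^{4(k + ηt/(1+η))} − (e^{4k} − 1)·cosh²(2ηt/(1+η)) ). Then ℐ(t) converges to ((1+η²)/(4η))² · (3 + e^{−4k})/4 as t → ∞. Consequently the asymptotic logarithmic negativity equals max{0, −(1/2)·log₂((3 + e^{−4k})·(1+η²)²/(16η²))}. -/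
/-!
With `x = exp (-2ηt/(1+η))`, the prefactor `exp (-8ηt/(1+η)) = x⁴` absorbs the growing
exponentials and `cosh²`, so `ℐ(t)` is a polynomial in `x`. As `x → 0`, `ℐ(t)` tends to the
value of that polynomial at `0`, which is positive, and the logarithmic negativity is continuous
there.
-/

open Filter Real Topology

theorem critical_invariant_factor_eq_poly (k a : ℝ) :
    exp (-4 * (k + 2 * a)) * (exp (4 * k) + exp (4 * a) - 1) *
        (exp (4 * (k + a)) - (exp (4 * k) - 1) * cosh (2 * a) ^ 2) =
      exp (-4 * k) * (((exp (4 * k) - 1) * exp (-2 * a) ^ 2 + 1) *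
        (exp (4 * k) - (exp (4 * k) - 1) * (1 + exp (-2 * a) ^ 2) ^ 2 / 4)) := by
  set x := exp (-2 * a)
  set y := exp (2 * a)
  have hy : y = x⁻¹ := by simp only [x, y, ← exp_neg]; ring_nf
  have h1 : exp (-4 * (k + 2 * a)) = exp (-4 * k) * x ^ 4 := by
    simp only [x, ← exp_nat_mul, ← exp_add]; ring_nf
  have h2 : exp (4 * a) = y ^ 2 := by simp only [y, ← exp_nat_mul]; ring_nf
  have h3 : exp (4 * (k + a)) = exp (4 * k) * y ^ 2 := by
    simp only [y, ← exp_nat_mul, ← exp_add]; ring_nf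
  have h4 : cosh (2 * a) = (y + x) / 2 := by
    rw [cosh_eq]; simp only [x, y]; ring_nf
  have hx : x ≠ 0 := (exp_pos _).ne'
  rw [h1, h2, h3, h4, hy]
  field_simp
  ring

theorem tendsto_exp_neg_mul_atTop {c : ℝ} (hc : 0 < c) :
    Tendsto (fun t => exp (-(c * t))) atTop (𝓝 0) :=
  tendsto_exp_neg_atTop_nhds_zero.comp (tendsto_id.const_mul_atTop hc)

theorem tendsto_critical_invariant_atTop {η : ℝ} (hη : 0 < η) (k C : ℝ) :
    Tendsto (fun t => C * exp (-4 * (k + 2 * η * t / (1 + η))) *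
        (exp (4 * k) + exp (4 * η * t / (1 + η)) - 1) *
        (exp (4 * (k + η * t / (1 + η))) - (exp (4 * k) - 1) * cosh (2 * η * t / (1 + η)) ^ 2))
      atTop (𝓝 (C * (3 + exp (-4 * k)) / 4)) := by
  let P : ℝ → ℝ := fun x => C * (exp (-4 * k) * (((exp (4 * k) - 1) * x ^ 2 + 1) *
    (exp (4 * k) - (exp (4 * k) - 1) * (1 + x ^ 2) ^ 2 / 4)))
  have hP0 : P 0 = C * (3 + exp (-4 * k)) / 4 := by
    have hq : exp (-4 * k) * exp (4 * k) = 1 := by rw [← exp_add]; simp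
    linear_combination (3 * C / 4) * hq
  have hfac : ∀ t, P (exp (-(2 * η / (1 + η) * t))) = C * exp (-4 * (k + 2 * η * t / (1 + η))) *
        (exp (4 * k) + exp (4 * η * t / (1 + η)) - 1) *
        (exp (4 * (k + η * t / (1 + η))) - (exp (4 * k) - 1) * cosh (2 * η * t / (1 + η)) ^ 2) :=
      fun t => by
    rw [show -(2 * η / (1 + η) * t) = -2 * (η * t / (1 + η)) by ring]
    simp only [P]
    rw [← critical_invariant_factor_eq_poly]
    ring_nf
  rw [← hP0]
  exact (((by fun_prop : Continuous P).tendsto 0).comp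
    (tendsto_exp_neg_mul_atTop (by positivity))).congr hfac

noncomputable def logNegativity (ℐ : ℝ) : ℝ := max 0 (-(1 / 2) * logb 2 (4 * ℐ))

theorem continuousAt_logNegativity {x : ℝ} (hx : x ≠ 0) : ContinuousAt logNegativity x :=
  continuousAt_const.max (continuousAt_const.mul
    ((continuousAt_logb (mul_ne_zero four_ne_zero hx)).comp (continuousAt_const.mul continuousAt_id)))

/-- At maximal coupling `λ = 1`, the symplectic invariant `ℐ(t)` tends to
`((1+η²)/(4η))²·(3+e^{−4k})/4` as `t → ∞`, and consequently the logarithmic negativity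
tends to `max{0, −(1/2)·log₂((3+e^{−4k})·(1+η²)²/(16η²))}`. -/
theorem asymptotic_entanglement_critical (η k : ℝ)
    (hη : η ∈ Set.Ioo (0 : ℝ) 1)
    (I : ℝ → ℝ)
    (hI : ∀ t : ℝ, I t =
      ((1 + η ^ 2) / (4 * η)) ^ 2 * Real.exp (-4 * (k + 2 * η * t / (1 + η))) *
        (Real.exp (4 * k) + Real.exp (4 * η * t / (1 + η)) - 1) *
        (Real.exp (4 * (k + η * t / (1 + η))) -
          (Real.exp (4 * k) - 1) * Real.cosh (2 * η * t / (1 + η)) ^ 2)) :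
    Filter.Tendsto I Filter.atTop
      (nhds (((1 + η ^ 2) / (4 * η)) ^ 2 * (3 + Real.exp (-4 * k)) / 4)) ∧
    Filter.Tendsto (fun t => max 0 (-(1 / 2) * Real.logb 2 (4 * I t))) Filter.atTop
      (nhds (max 0 (-(1 / 2) *
        Real.logb 2 ((3 + Real.exp (-4 * k)) * (1 + η ^ 2) ^ 2 / (16 * η ^ 2))))) := by
  have hη0 : 0 < η := hη.1
  have hlim := (tendsto_critical_invariant_atTop hη0 k _).congr fun t => (hI t).symm
  refine ⟨hlim, ?_⟩
  have harg : (3 + exp (-4 * k)) * (1 + η ^ 2) ^ 2 / (16 * η ^ 2) =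
      4 * (((1 + η ^ 2) / (4 * η)) ^ 2 * (3 + exp (-4 * k)) / 4) := by
    field_simp
    ring
  rw [harg]
  exact (continuousAt_logNegativity (by positivity)).tendsto.comp hlim
end

section
/- Let η ∈ (0,1), λ ∈ [−1,1] and k ∈ ℝ, and define for t ≥ 0 the function ℐ(t) = ((1+η²)/(4η))² · exp(−4(k + 2ηt/(1+η))) · (e^{4k} + e^{4ηt/(1+η)} − 1) · ( e^{4(k + ηt/(1+η))} − (e^{4k} − 1)·cosh²(2ηλt/(1+η)) ). Then ℐ(0) = ((1+η²)/(4η))² > 1/4, and there exists ε > 0 such that 4·ℐ(t) > 1 for all t ∈ [0, ε]. Consequently the logarithmic negativity E(t) = max{0, −(1/2)·log₂(4·ℐ(t))} vanishes identically on [0, ε]: entanglement between the two chains appears only after a strictly positive delay time (sudden birth of entanglement). -/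
/-- Sudden birth of entanglement: `ℐ(0) = ((1+η²)/(4η))² > 1/4`, and there is `ε > 0`
with `4ℐ(t) > 1` on `[0, ε]`, so the logarithmic negativity
`E(t) = max{0, −(1/2)·log₂(4ℐ(t))}` vanishes identically on `[0, ε]`. -/
theorem sudden_birth_of_entanglement (η lam k : ℝ)
    (hη : η ∈ Set.Ioo (0 : ℝ) 1) (hlam : lam ∈ Set.Icc (-1 : ℝ) 1)
    (I : ℝ → ℝ)
    (hI : ∀ t : ℝ, I t =
      ((1 + η ^ 2) / (4 * η)) ^ 2 * Real.exp (-4 * (k + 2 * η * t / (1 + η))) *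
        (Real.exp (4 * k) + Real.exp (4 * η * t / (1 + η)) - 1) *
        (Real.exp (4 * (k + η * t / (1 + η))) -
          (Real.exp (4 * k) - 1) * Real.cosh (2 * η * lam * t / (1 + η)) ^ 2)) :
    I 0 = ((1 + η ^ 2) / (4 * η)) ^ 2 ∧
    (1 / 4 : ℝ) < ((1 + η ^ 2) / (4 * η)) ^ 2 ∧
    ∃ ε > (0 : ℝ), ∀ t ∈ Set.Icc (0 : ℝ) ε,
      1 < 4 * I t ∧ max 0 (-(1 / 2) * Real.logb 2 (4 * I t)) = 0 := by
  obtain ⟨hη0, hη1⟩ := hη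
  have hI0 : I 0 = ((1 + η ^ 2) / (4 * η)) ^ 2 := by
    have h := hI 0
    simp only [mul_zero, zero_div, zero_mul, mul_zero, add_zero, Real.exp_zero,
      Real.cosh_zero, one_pow, mul_one] at h
    rw [h]
    have he : Real.exp (-4 * k) * Real.exp (4 * k) = 1 := by
      rw [← Real.exp_add]; ring_nf; exact Real.exp_zero
    nlinarith [Real.exp_pos (4 * k), he]
  have hquarter : (1 / 4 : ℝ) < ((1 + η ^ 2) / (4 * η)) ^ 2 := by
    have hc : (1 / 2 : ℝ) < (1 + η ^ 2) / (4 * η) := by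
      rw [lt_div_iff₀ (by positivity : (0:ℝ) < 4 * η)]
      nlinarith [sq_nonneg (1 - η)]
    nlinarith [hc]
  refine ⟨hI0, hquarter, ?_⟩
  have hIeq : I = fun t => ((1 + η ^ 2) / (4 * η)) ^ 2 *
      Real.exp (-4 * (k + 2 * η * t / (1 + η))) *
        (Real.exp (4 * k) + Real.exp (4 * η * t / (1 + η)) - 1) *
        (Real.exp (4 * (k + η * t / (1 + η))) -
          (Real.exp (4 * k) - 1) * Real.cosh (2 * η * lam * t / (1 + η)) ^ 2) :=
    funext hI
  have hcont : Continuous I := by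
    rw [hIeq]; fun_prop
  have h4 : (1 : ℝ) < 4 * I 0 := by rw [hI0]; nlinarith [hquarter]
  have htend : Filter.Tendsto (fun t => 4 * I t) (nhds 0) (nhds (4 * I 0)) :=
    (continuous_const.mul hcont).continuousAt
  have hev : ∀ᶠ t in nhds (0 : ℝ), 1 < 4 * I t :=
    htend.eventually (eventually_gt_nhds h4)
  rw [Metric.eventually_nhds_iff] at hev
  obtain ⟨δ, hδ, hball⟩ := hev
  refine ⟨δ / 2, by positivity, fun t ht => ?_⟩
  have h1 : 1 < 4 * I t := by
    apply hball
    rw [Real.dist_eq]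
    rw [Set.mem_Icc] at ht
    rw [abs_sub_lt_iff]
    constructor <;> linarith [hδ, ht.1, ht.2]
  refine ⟨h1, ?_⟩
  have hlog : 0 < Real.logb 2 (4 * I t) := Real.logb_pos (by norm_num) h1
  exact max_eq_left (by nlinarith [hlog])
end

section
/- Let η ∈ (0,1), λ ∈ (−1,1) and k ∈ ℝ, and define for t ≥ 0 the function ℐ(t) = ((1+η²)/(4η))² · exp(−4(k + 2ηt/(1+η))) · (e^{4k} + e^{4ηt/(1+η)} − 1) · ( e^{4(k + ηt/(1+η))} − (e^{4k} − 1)·cosh²(2ηλt/(1+η)) ). Then there exists T > 0 such that 4·ℐ(t) > 1 for all t ≥ T. Consequently, for any dissipative coupling |λ| < 1 and any nonzero bath temperature (η < 1), the logarithmic negativity E(t) = max{0, −(1/2)·log₂(4·ℐ(t))} vanishes for all sufficiently large times: any bath-generated entanglement between the two chains disappears in finite time (sudden death of entanglement). -/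
open Filter Real Topology

private lemma cosh_sq_le_exp (x : ℝ) : Real.cosh x ^ 2 ≤ Real.exp (2 * |x|) := by
  have h1 : Real.cosh x ≤ Real.exp |x| := by
    rw [Real.cosh_eq]
    have h2 := Real.exp_le_exp.mpr (le_abs_self x)
    have h3 := Real.exp_le_exp.mpr (neg_le_abs x)
    linarith
  calc Real.cosh x ^ 2 ≤ Real.exp |x| ^ 2 :=
        pow_le_pow_left₀ (Real.cosh_pos x).le h1 2
    _ = Real.exp (2 * |x|) := by
        rw [sq, ← Real.exp_add]; ring_nf

/-- Sudden death of entanglement: for `|λ| < 1` and nonzero temperature (`η < 1`), there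
is `T > 0` such that `4ℐ(t) > 1` for all `t ≥ T`, so the logarithmic negativity
`E(t) = max{0, −(1/2)·log₂(4ℐ(t))}` vanishes for all sufficiently large times. -/
theorem sudden_death_of_entanglement (η lam k : ℝ)
    (hη : η ∈ Set.Ioo (0 : ℝ) 1) (hlam : lam ∈ Set.Ioo (-1 : ℝ) 1)
    (I : ℝ → ℝ)
    (hI : ∀ t : ℝ, I t =
      ((1 + η ^ 2) / (4 * η)) ^ 2 * Real.exp (-4 * (k + 2 * η * t / (1 + η))) *
        (Real.exp (4 * k) + Real.exp (4 * η * t / (1 + η)) - 1) *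
        (Real.exp (4 * (k + η * t / (1 + η))) -
          (Real.exp (4 * k) - 1) * Real.cosh (2 * η * lam * t / (1 + η)) ^ 2)) :
    ∃ T > (0 : ℝ), ∀ t ≥ T,
      1 < 4 * I t ∧ max 0 (-(1 / 2) * Real.logb 2 (4 * I t)) = 0 := by
  obtain ⟨hη0, hη1⟩ := hη
  obtain ⟨hl1, hl2⟩ := hlam
  have hlabs : |lam| < 1 := abs_lt.mpr ⟨hl1, hl2⟩
  set a : ℝ := η / (1 + η) with ha
  have hη1' : (0:ℝ) < 1 + η := by linarith
  have hne : (1 + η) ≠ 0 := hη1'.ne'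
  have ha0 : 0 < a := div_pos hη0 hη1'
  set C : ℝ := 4 * ((1 + η ^ 2) / (4 * η)) ^ 2 with hC
  have hC1 : 1 < C := by
    have hη2 : (0:ℝ) < (4 * η) ^ 2 := by positivity
    have hsq : 0 < (1 - η ^ 2) := by nlinarith
    rw [hC, div_pow, ← mul_div_assoc, lt_div_iff₀ hη2]
    nlinarith [mul_pos hsq hsq]
  -- key algebraic identity
  have key : ∀ t : ℝ, 4 * I t =
      C * ((Real.exp (4*k) - 1) * (Real.exp (4*a*t))⁻¹ + 1) *
        (1 - (1 - (Real.exp (4*k))⁻¹) *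
          ((Real.exp (4*a*t))⁻¹ * Real.cosh (2*lam*(a*t)) ^ 2)) := by
    intro t
    rw [hI t]
    have e1 : 4 * η * t / (1 + η) = 4 * a * t := by
      rw [ha]; field_simp; try ring
    have e2 : -4 * (k + 2 * η * t / (1 + η)) = -(4*k) + (-(4*a*t) + -(4*a*t)) := by
      rw [ha]; field_simp; try ring
    have e3 : 4 * (k + η * t / (1 + η)) = 4*k + 4*a*t := by
      rw [ha]; field_simp; try ring
    have e4 : 2 * η * lam * t / (1 + η) = 2*lam*(a*t) := by
      rw [ha]; field_simp; try ring
    rw [e1, e2, e3, e4, Real.exp_add, Real.exp_add, Real.exp_add,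
      Real.exp_neg, Real.exp_neg]
    have hE : Real.exp (4*a*t) ≠ 0 := (Real.exp_pos _).ne'
    have hA : Real.exp (4*k) ≠ 0 := (Real.exp_pos _).ne'
    rw [hC]
    generalize (1 + η ^ 2) / (4 * η) = c
    field_simp
    ring
  -- limits
  have hEinv : Tendsto (fun t : ℝ => (Real.exp (4*a*t))⁻¹) atTop (𝓝 0) := by
    have h1 : Tendsto (fun t : ℝ => 4*a*t) atTop atTop :=
      Tendsto.const_mul_atTop (by positivity : (0:ℝ) < 4*a) tendsto_id
    exact (Real.tendsto_exp_atTop.comp h1).inv_tendsto_atTop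
  have hq : Tendsto (fun t : ℝ => (Real.exp (4*a*t))⁻¹ * Real.cosh (2*lam*(a*t)) ^ 2)
      atTop (𝓝 0) := by
    apply squeeze_zero' (g := fun t : ℝ => (Real.exp (4 * (1 - |lam|) * a * t))⁻¹)
    · filter_upwards with t
      positivity
    · filter_upwards [eventually_ge_atTop (0:ℝ)] with t ht
      have hat : 0 ≤ a * t := mul_nonneg ha0.le ht
      have hb := cosh_sq_le_exp (2*lam*(a*t))
      have habs : 2 * |2*lam*(a*t)| = 4 * |lam| * a * t := by
        rw [abs_mul, abs_mul, abs_of_nonneg hat,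
          abs_of_nonneg (by norm_num : (0:ℝ) ≤ 2)]
        ring
      rw [habs] at hb
      have hEpos : (0:ℝ) < Real.exp (4*a*t) := Real.exp_pos _
      calc (Real.exp (4*a*t))⁻¹ * Real.cosh (2*lam*(a*t)) ^ 2
          ≤ (Real.exp (4*a*t))⁻¹ * Real.exp (4 * |lam| * a * t) :=
            mul_le_mul_of_nonneg_left hb (by positivity)
        _ = (Real.exp (4 * (1 - |lam|) * a * t))⁻¹ := by
            rw [← Real.exp_neg, ← Real.exp_neg, ← Real.exp_add]
            congr 1; ring
    · have h1 : Tendsto (fun t : ℝ => 4 * (1 - |lam|) * a * t) atTop atTop :=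
        Tendsto.const_mul_atTop (by nlinarith : (0:ℝ) < 4 * (1 - |lam|) * a) tendsto_id
      exact (Real.tendsto_exp_atTop.comp h1).inv_tendsto_atTop
  have hg1 : Tendsto (fun t : ℝ => (Real.exp (4*k) - 1) * (Real.exp (4*a*t))⁻¹ + 1)
      atTop (𝓝 1) := by
    have := (hEinv.const_mul (Real.exp (4*k) - 1)).add_const 1
    simpa using this
  have hg2 : Tendsto (fun t : ℝ => 1 - (1 - (Real.exp (4*k))⁻¹) *
      ((Real.exp (4*a*t))⁻¹ * Real.cosh (2*lam*(a*t)) ^ 2)) atTop (𝓝 1) := by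
    have := (hq.const_mul (1 - (Real.exp (4*k))⁻¹)).const_sub 1
    simpa using this
  have hf : Tendsto (fun t : ℝ => 4 * I t) atTop (𝓝 C) := by
    have h := (hg1.const_mul C).mul hg2
    simp only [mul_one] at h
    exact h.congr (fun t => (key t).symm)
  have hev : ∀ᶠ t in atTop, 1 < 4 * I t := hf.eventually (eventually_gt_nhds hC1)
  obtain ⟨T₀, hT₀⟩ := eventually_atTop.mp hev
  refine ⟨max T₀ 1, lt_of_lt_of_le one_pos (le_max_right _ _), fun t ht => ?_⟩
  have h1 : 1 < 4 * I t := hT₀ t (le_trans (le_max_left _ _) ht)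
  refine ⟨h1, ?_⟩
  have hlog : 0 < Real.logb 2 (4 * I t) := Real.logb_pos one_lt_two h1
  apply max_eq_left
  nlinarith
end

section
/- Let η ∈ (0,1) and k ∈ ℝ satisfy (3 + e^{−4k})·(1+η²)² < 16·η², take λ = 1, and define for t ≥ 0 the function ℐ(t) = ((1+η²)/(4η))² · exp(−4(k + 2ηt/(1+η))) · (e^{4k} + e^{4ηt/(1+η)} − 1) · ( e^{4(k + ηt/(1+η))} − (e^{4k} − 1)·cosh²(2ηt/(1+η)) ). Then there exists T > 0 such that 4·ℐ(t) < 1 for all t ≥ T; consequently the logarithmic negativity E(t) = max{0, −(1/2)·log₂(4·ℐ(t))} is strictly positive for all t ≥ T, i.e. at maximal dissipative coupling λ = 1 the bath-generated entanglement between the two chains persists for asymptotically long times even at nonvanishing temperature, provided the temperature is below the critical value determined by the condition (3 + e^{−4k})·(1+η²)² = 16·η². -/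
open Filter Real

/-- Persistent asymptotic entanglement at maximal coupling `λ = 1`: if the temperature is
below the critical value, i.e. `(3+e^{−4k})·(1+η²)² < 16η²`, then there is `T > 0` with
`4ℐ(t) < 1` for all `t ≥ T`, so the logarithmic negativity
`E(t) = max{0, −(1/2)·log₂(4ℐ(t))}` is strictly positive for all `t ≥ T`. -/
theorem persistent_asymptotic_entanglement (η k : ℝ)
    (hη : η ∈ Set.Ioo (0 : ℝ) 1)
    (hcrit : (3 + Real.exp (-4 * k)) * (1 + η ^ 2) ^ 2 < 16 * η ^ 2)
    (I : ℝ → ℝ)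
    (hI : ∀ t : ℝ, I t =
      ((1 + η ^ 2) / (4 * η)) ^ 2 * Real.exp (-4 * (k + 2 * η * t / (1 + η))) *
        (Real.exp (4 * k) + Real.exp (4 * η * t / (1 + η)) - 1) *
        (Real.exp (4 * (k + η * t / (1 + η))) -
          (Real.exp (4 * k) - 1) * Real.cosh (2 * η * t / (1 + η)) ^ 2)) :
    ∃ T > (0 : ℝ), ∀ t ≥ T,
      4 * I t < 1 ∧ 0 < max 0 (-(1 / 2) * Real.logb 2 (4 * I t)) := by
  obtain ⟨hη0, hη1⟩ := hη
  have hη' : (1 : ℝ) + η ≠ 0 := by positivity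
  set A : ℝ := Real.exp (4 * k) with hA
  have hApos : 0 < A := Real.exp_pos _
  set F : ℝ → ℝ := fun u =>
    ((1 + η ^ 2) / (4 * η)) ^ 2 * A⁻¹ *
      ((1 + (A - 1) * u) *
        ((3 * A + 1) - 2 * (A - 1) * u - (A - 1) * u ^ 2)) with hF
  -- algebraic identity: `4 ℐ(t)` as a polynomial in `u = e^{-4ηt/(1+η)}`
  have hrepr : ∀ t : ℝ, 4 * I t = F (Real.exp (-(4 * (η / (1 + η)) * t))) := by
    intro t
    rw [hI t]
    rw [show -4 * (k + 2 * η * t / (1 + η)) =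
        -(4 * k) + (-(2 * η * t / (1 + η)) + -(2 * η * t / (1 + η)) +
          (-(2 * η * t / (1 + η)) + -(2 * η * t / (1 + η)))) by ring]
    rw [show 4 * η * t / (1 + η) = 2 * η * t / (1 + η) + 2 * η * t / (1 + η) by ring]
    rw [show 4 * (k + η * t / (1 + η)) =
        4 * k + (2 * η * t / (1 + η) + 2 * η * t / (1 + η)) by ring]
    rw [show -(4 * (η / (1 + η)) * t) =
        -(2 * η * t / (1 + η)) + -(2 * η * t / (1 + η)) by ring]
    rw [Real.cosh_eq]
    simp only [Real.exp_add, Real.exp_neg, hF, ← hA]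
    set Y : ℝ := Real.exp (2 * η * t / (1 + η)) with hY
    have hYne : Y ≠ 0 := Real.exp_ne_zero _
    have hAne : A ≠ 0 := ne_of_gt hApos
    have hηne : η ≠ 0 := ne_of_gt hη0
    field_simp
    ring
  -- the exponential factor tends to 0
  have hu : Tendsto (fun t : ℝ => Real.exp (-(4 * (η / (1 + η)) * t))) atTop (nhds 0) := by
    apply Real.tendsto_exp_atBot.comp
    apply tendsto_neg_atTop_atBot.comp
    exact Tendsto.const_mul_atTop (by positivity) tendsto_id
  have hcont : Continuous F := by
    rw [hF]; continuity
  have htend : Tendsto (fun t : ℝ => 4 * I t) atTop (nhds (F 0)) := by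
    exact ((hcont.tendsto 0).comp hu).congr fun t => (hrepr t).symm
  -- value of the limit
  have hF0 : F 0 = (3 + Real.exp (-4 * k)) * ((1 + η ^ 2) / (4 * η)) ^ 2 := by
    have hAinv : Real.exp (-4 * k) = A⁻¹ := by
      rw [hA, ← Real.exp_neg]; ring_nf
    rw [hF, hAinv]
    have hAne : A ≠ 0 := ne_of_gt hApos
    field_simp
    ring
  have hF0pos : 0 < F 0 := by
    rw [hF0]; positivity
  have hF0lt : F 0 < 1 := by
    rw [hF0]
    have h16 : (0:ℝ) < 16 * η ^ 2 := by positivity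
    have key : (3 + Real.exp (-4 * k)) * ((1 + η ^ 2) / (4 * η)) ^ 2 =
        (3 + Real.exp (-4 * k)) * (1 + η ^ 2) ^ 2 / (16 * η ^ 2) := by
      field_simp; ring
    rw [key, div_lt_one h16]
    exact hcrit
  -- eventually `4 ℐ(t) ∈ (0, 1)`
  have hmem : F 0 ∈ Set.Ioo (0:ℝ) 1 := ⟨hF0pos, hF0lt⟩
  have hev : ∀ᶠ t in atTop, 4 * I t ∈ Set.Ioo (0:ℝ) 1 :=
    htend.eventually (isOpen_Ioo.eventually_mem hmem)
  obtain ⟨T₀, hT₀⟩ := Filter.eventually_atTop.mp hev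
  refine ⟨max T₀ 1, lt_of_lt_of_le one_pos (le_max_right _ _), fun t ht => ?_⟩
  obtain ⟨h0, h1⟩ := hT₀ t (le_trans (le_max_left _ _) ht)
  refine ⟨h1, ?_⟩
  have hlog : Real.logb 2 (4 * I t) < 0 := Real.logb_neg one_lt_two h0 h1
  have : 0 < -(1 / 2 : ℝ) * Real.logb 2 (4 * I t) := by linarith
  exact lt_max_iff.mpr (Or.inr this)
end
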